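/- With the data of the mean-field operator setup (finite type set Φ, matrices H(φ), G(φ), Q(φ) with ‖H(φ)‖ < 1 for all φ, probability weights P, initial means ν(φ)), define ζ := ∑_{φ∈Φ} (‖Q(φ)‖ ‖G(φ)‖ / (1 - ‖H(φ)‖)²) P(φ). Then for any two bounded sequences X̄¹, X̄² : ℕ → ℝⁿ, sup_k ‖T(X̄¹)(k) - T(X̄²)(k)‖ ≤ ζ · sup_k ‖X̄¹_k - X̄²_k‖; i.e., T is ζ-Lipschitz in the supremum norm on bounded ℝⁿ-valued sequences. -/

import Mathlib

/-!
The difference of two trajectories is, by linearity, the trajectory with zero initial mean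
driven by the difference of the sequences. Each inner series is dominated by a geometric series
with ratio `‖H(φ)ᵀ‖ = ‖H(φ)‖ < 1`, hence bounded by `‖Q(φ)‖ D / (1 - ‖H(φ)‖)`, and the finite
convolution with powers of `H(φ)` costs a second factor `1 / (1 - ‖H(φ)‖)`. Averaging over `P`
gives `ζ D`.
-/

/-- The aggregate trajectory of agents of type `φ`:
`X̂_k(φ; X̄) = H(φ)^k ν(φ) + ∑_{j=0}^{k-1} H(φ)^{k-1-j} G(φ) ∑_{s=j+1}^∞ (H(φ)ᵀ)^{s-j-1} Q(φ) X̄_s`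
(the inner series reindexed via `s = j + 1 + m`). Matrices are modeled as continuous
linear maps on Euclidean space; transpose is the adjoint. -/
noncomputable def XhatMF {n : ℕ} {Φ : Type*}
    (H G Q : Φ → (EuclideanSpace ℝ (Fin n) →L[ℝ] EuclideanSpace ℝ (Fin n)))
    (ν : Φ → EuclideanSpace ℝ (Fin n)) (X : ℕ → EuclideanSpace ℝ (Fin n))
    (φ : Φ) (k : ℕ) : EuclideanSpace ℝ (Fin n) :=
  ((H φ) ^ k) (ν φ) +
    ∑ j ∈ Finset.range k, ((H φ) ^ (k - 1 - j))
      ((G φ) (∑' m : ℕ, ((ContinuousLinearMap.adjoint (H φ)) ^ m) ((Q φ) (X (j + 1 + m)))))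

/-- The mean-field consistency operator `T(X̄)(k) = ∑_{φ ∈ Φ} X̂_k(φ; X̄) P(φ)`. -/
noncomputable def TMF {n : ℕ} {Φ : Type*} [Fintype Φ]
    (H G Q : Φ → (EuclideanSpace ℝ (Fin n) →L[ℝ] EuclideanSpace ℝ (Fin n)))
    (P : Φ → ℝ) (ν : Φ → EuclideanSpace ℝ (Fin n)) (X : ℕ → EuclideanSpace ℝ (Fin n))
    (k : ℕ) : EuclideanSpace ℝ (Fin n) :=
  ∑ φ, P φ • XhatMF H G Q ν X φ k

open Finset

namespace ContinuousLinearMap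

variable {𝕜 E : Type*} [NontriviallyNormedField 𝕜] [SeminormedAddCommGroup E] [NormedSpace 𝕜 E]

lemma norm_pow_apply_le (A : E →L[𝕜] E) (m : ℕ) (x : E) : ‖(A ^ m) x‖ ≤ ‖A‖ ^ m * ‖x‖ := by
  induction m generalizing x with
  | zero => simp
  | succ m ih =>
    calc ‖(A ^ (m + 1)) x‖ = ‖(A ^ m) (A x)‖ := by rw [pow_succ]; rfl
      _ ≤ ‖A‖ ^ m * (‖A‖ * ‖x‖) := (ih _).trans (by gcongr; exact A.le_opNorm x)
      _ = ‖A‖ ^ (m + 1) * ‖x‖ := by ring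

variable {A : E →L[𝕜] E} {y : ℕ → E} {c : ℝ}

lemma summable_pow_apply [CompleteSpace E] (hA : ‖A‖ < 1) (hy : ∀ m, ‖y m‖ ≤ c) :
    Summable fun m => (A ^ m) (y m) :=
  ((summable_geometric_of_lt_one (norm_nonneg A) hA).mul_right c).of_norm_bounded fun m =>
    (A.norm_pow_apply_le m _).trans (by gcongr; exact hy m)

lemma norm_tsum_pow_apply_le (hA : ‖A‖ < 1) (hy : ∀ m, ‖y m‖ ≤ c) :
    ‖∑' m, (A ^ m) (y m)‖ ≤ c / (1 - ‖A‖) := by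
  rw [div_eq_inv_mul]
  exact tsum_of_norm_bounded ((hasSum_geometric_of_lt_one (norm_nonneg A) hA).mul_right c)
    fun m => (A.norm_pow_apply_le m _).trans (by gcongr; exact hy m)

lemma norm_sum_range_pow_apply_le (hA : ‖A‖ < 1) (hy : ∀ j, ‖y j‖ ≤ c) (k : ℕ) :
    ‖∑ j ∈ range k, (A ^ (k - 1 - j)) (y j)‖ ≤ c / (1 - ‖A‖) := by
  have hc : 0 ≤ c := (norm_nonneg _).trans (hy 0)
  calc ‖∑ j ∈ range k, (A ^ (k - 1 - j)) (y j)‖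
      ≤ ∑ j ∈ range k, ‖A‖ ^ (k - 1 - j) * c :=
        norm_sum_le_of_le _ fun j _ => (A.norm_pow_apply_le _ _).trans (by gcongr; exact hy j)
    _ = (∑ j ∈ Ico 0 k, ‖A‖ ^ j) * c := by
        rw [sum_range_reflect (fun j => ‖A‖ ^ j * c), ← sum_mul, range_eq_Ico]
    _ ≤ ‖A‖ ^ 0 / (1 - ‖A‖) * c := by
        gcongr; exact geom_sum_Ico_le_of_lt_one (norm_nonneg A) hA
    _ = c / (1 - ‖A‖) := by ring

end ContinuousLinearMap

section MeanField

variable {n : ℕ} {Φ : Type*}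
  (H G Q : Φ → (EuclideanSpace ℝ (Fin n) →L[ℝ] EuclideanSpace ℝ (Fin n)))

lemma summable_adjoint_pow_apply {φ : Φ} (hH : ‖H φ‖ < 1) {X : ℕ → EuclideanSpace ℝ (Fin n)}
    {C : ℝ} (hX : ∀ k, ‖X k‖ ≤ C) (j : ℕ) :
    Summable fun m => ((ContinuousLinearMap.adjoint (H φ)) ^ m) ((Q φ) (X (j + 1 + m))) := by
  refine ContinuousLinearMap.summable_pow_apply (c := ‖Q φ‖ * C) ?_ fun m => ?_
  · rwa [LinearIsometryEquiv.norm_map]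
  · exact (Q φ).le_of_opNorm_le_of_le le_rfl (hX _)

lemma XhatMF_sub {φ : Φ} (hH : ‖H φ‖ < 1) (ν₁ ν₂ : Φ → EuclideanSpace ℝ (Fin n))
    {X₁ X₂ : ℕ → EuclideanSpace ℝ (Fin n)} {C₁ C₂ : ℝ}
    (hX₁ : ∀ k, ‖X₁ k‖ ≤ C₁) (hX₂ : ∀ k, ‖X₂ k‖ ≤ C₂) (k : ℕ) :
    XhatMF H G Q ν₁ X₁ φ k - XhatMF H G Q ν₂ X₂ φ k = XhatMF H G Q (ν₁ - ν₂) (X₁ - X₂) φ k := by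
  have hseries : ∀ j,
      ∑' m, ((ContinuousLinearMap.adjoint (H φ)) ^ m) ((Q φ) ((X₁ - X₂) (j + 1 + m)))
      = ∑' m, ((ContinuousLinearMap.adjoint (H φ)) ^ m) ((Q φ) (X₁ (j + 1 + m)))
        - ∑' m, ((ContinuousLinearMap.adjoint (H φ)) ^ m) ((Q φ) (X₂ (j + 1 + m))) := fun j => by
    simp only [Pi.sub_apply, map_sub]
    exact (summable_adjoint_pow_apply H Q hH hX₁ j).tsum_sub
      (summable_adjoint_pow_apply H Q hH hX₂ j)
  simp only [XhatMF, hseries]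
  simp only [Pi.sub_apply, map_sub, sum_sub_distrib]
  abel

lemma norm_XhatMF_zero_le {φ : Φ} (hH : ‖H φ‖ < 1) {X : ℕ → EuclideanSpace ℝ (Fin n)} {D : ℝ}
    (hX : ∀ k, ‖X k‖ ≤ D) (k : ℕ) :
    ‖XhatMF H G Q 0 X φ k‖ ≤ ‖Q φ‖ * ‖G φ‖ / (1 - ‖H φ‖) ^ 2 * D := by
  have hH' : ‖ContinuousLinearMap.adjoint (H φ)‖ < 1 := by rwa [LinearIsometryEquiv.norm_map]
  have hseries : ∀ j, ‖(G φ) (∑' m, ((ContinuousLinearMap.adjoint (H φ)) ^ m)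
      ((Q φ) (X (j + 1 + m))))‖ ≤ ‖G φ‖ * (‖Q φ‖ * D / (1 - ‖H φ‖)) := fun j =>
    (G φ).le_of_opNorm_le_of_le le_rfl <| by
      simpa only [LinearIsometryEquiv.norm_map] using
        ContinuousLinearMap.norm_tsum_pow_apply_le hH' fun m =>
          (Q φ).le_of_opNorm_le_of_le le_rfl (hX (j + 1 + m))
  have h1 : 1 - ‖H φ‖ ≠ 0 := (sub_pos.2 hH).ne'
  calc ‖XhatMF H G Q 0 X φ k‖
      ≤ ‖G φ‖ * (‖Q φ‖ * D / (1 - ‖H φ‖)) / (1 - ‖H φ‖) := by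
        simpa [XhatMF] using ContinuousLinearMap.norm_sum_range_pow_apply_le hH hseries k
    _ = ‖Q φ‖ * ‖G φ‖ / (1 - ‖H φ‖) ^ 2 * D := by field_simp

variable [Fintype Φ] (P : Φ → ℝ)

lemma TMF_sub (hH : ∀ φ, ‖H φ‖ < 1) (ν₁ ν₂ : Φ → EuclideanSpace ℝ (Fin n))
    {X₁ X₂ : ℕ → EuclideanSpace ℝ (Fin n)} {C₁ C₂ : ℝ}
    (hX₁ : ∀ k, ‖X₁ k‖ ≤ C₁) (hX₂ : ∀ k, ‖X₂ k‖ ≤ C₂) (k : ℕ) :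
    TMF H G Q P ν₁ X₁ k - TMF H G Q P ν₂ X₂ k = TMF H G Q P (ν₁ - ν₂) (X₁ - X₂) k := by
  simp only [TMF, ← sum_sub_distrib, ← smul_sub, XhatMF_sub H G Q (hH _) ν₁ ν₂ hX₁ hX₂]

lemma norm_TMF_zero_le (hH : ∀ φ, ‖H φ‖ < 1) (hP : ∀ φ, 0 ≤ P φ)
    {X : ℕ → EuclideanSpace ℝ (Fin n)} {D : ℝ} (hX : ∀ k, ‖X k‖ ≤ D) (k : ℕ) :
    ‖TMF H G Q P 0 X k‖ ≤ (∑ φ, ‖Q φ‖ * ‖G φ‖ / (1 - ‖H φ‖) ^ 2 * P φ) * D := by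
  rw [sum_mul]
  refine norm_sum_le_of_le _ fun φ _ => ?_
  calc ‖P φ • XhatMF H G Q 0 X φ k‖
      ≤ P φ * (‖Q φ‖ * ‖G φ‖ / (1 - ‖H φ‖) ^ 2 * D) := by
        rw [norm_smul, Real.norm_of_nonneg (hP φ)]
        gcongr
        exacts [hP φ, norm_XhatMF_zero_le H G Q (hH φ) hX k]
    _ = ‖Q φ‖ * ‖G φ‖ / (1 - ‖H φ‖) ^ 2 * P φ * D := by ring

end MeanField

theorem stmt5_general {n : ℕ} {Φ : Type*} [Fintype Φ]
    (H G Q : Φ → (EuclideanSpace ℝ (Fin n) →L[ℝ] EuclideanSpace ℝ (Fin n)))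
    (hH : ∀ φ, ‖H φ‖ < 1)
    (P : Φ → ℝ) (hP : ∀ φ, 0 ≤ P φ)
    (ν : Φ → EuclideanSpace ℝ (Fin n))
    (X1 X2 : ℕ → EuclideanSpace ℝ (Fin n)) (C1 C2 : ℝ)
    (hX1 : ∀ k, ‖X1 k‖ ≤ C1) (hX2 : ∀ k, ‖X2 k‖ ≤ C2)
    (D : ℝ) (hD : ∀ k, ‖X1 k - X2 k‖ ≤ D) :
    ∀ k, ‖TMF H G Q P ν X1 k - TMF H G Q P ν X2 k‖
      ≤ (∑ φ, ‖Q φ‖ * ‖G φ‖ / (1 - ‖H φ‖) ^ 2 * P φ) * D := by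
  intro k
  rw [TMF_sub H G Q P hH ν ν hX1 hX2, sub_self]
  exact norm_TMF_zero_le H G Q P hH hP hD k

/-- In the mean-field operator setup, with
`ζ = ∑_φ (‖Q(φ)‖‖G(φ)‖/(1-‖H(φ)‖)²) P(φ)`, for any two bounded sequences `X̄¹, X̄²`
and any uniform bound `D` on `‖X̄¹_k - X̄²_k‖` (i.e. any upper bound of the sup),
`‖T(X̄¹)(k) - T(X̄²)(k)‖ ≤ ζ D` for every `k`; i.e. `T` is `ζ`-Lipschitz in the
supremum norm on bounded sequences. -/
theorem stmt5 {n : ℕ} {Φ : Type*} [Fintype Φ] [Nonempty Φ]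
    (H G Q : Φ → (EuclideanSpace ℝ (Fin n) →L[ℝ] EuclideanSpace ℝ (Fin n)))
    (hH : ∀ φ, ‖H φ‖ < 1)
    (P : Φ → ℝ) (hP : ∀ φ, 0 ≤ P φ) (hPsum : ∑ φ, P φ = 1)
    (ν : Φ → EuclideanSpace ℝ (Fin n))
    (X1 X2 : ℕ → EuclideanSpace ℝ (Fin n)) (C1 C2 : ℝ)
    (hX1 : ∀ k, ‖X1 k‖ ≤ C1) (hX2 : ∀ k, ‖X2 k‖ ≤ C2)
    (D : ℝ) (hD : ∀ k, ‖X1 k - X2 k‖ ≤ D) :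
    ∀ k, ‖TMF H G Q P ν X1 k - TMF H G Q P ν X2 k‖
      ≤ (∑ φ, ‖Q φ‖ * ‖G φ‖ / (1 - ‖H φ‖) ^ 2 * P φ) * D :=
  stmt5_general H G Q hH P hP ν X1 X2 C1 C2 hX1 hX2 D hD
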